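/- arXiv:1409.5133 — 5 statements merged into one kernel-verified Lean document; each statement's English description precedes it below -/
import Mathlib

section
/- Let A, B, C, D be bounded operators forming a 2×2 block operator 𝔸 on X₁ × X₂. If λ ∈ ℂ is such that λ - A and λ - D are invertible and ‖B(λ-D)⁻¹C(λ-A)⁻¹‖ < 1, then λ - 𝔸 is invertible. Equivalently, the spectrum of 𝔸 is contained in σ(A) ∪ σ(D) ∪ { λ ∉ σ(A)∪σ(D) : ‖B(λ-D)⁻¹C(λ-A)⁻¹‖ ≥ 1 }. -/
/-!
Write `a = λ - A` and `d = λ - D`. With the Schur complement `s = a - B d⁻¹ C`, the operator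
`λ - 𝔸` factors as
`[1, -B d⁻¹; 0, 1] * [s, 0; 0, d] * [1, 0; -d⁻¹ C, 1]`,
whose outer factors are unitriangular, hence invertible. Since `s = (1 - B d⁻¹ C a⁻¹) a`, the
Neumann series makes `s` invertible as soon as `‖B d⁻¹ C a⁻¹‖ < 1`.
-/

open ContinuousLinearMap

section BlockOperator

variable {R X₁ X₂ : Type*} [Ring R]
  [TopologicalSpace X₁] [AddCommGroup X₁] [IsTopologicalAddGroup X₁] [Module R X₁]
  [TopologicalSpace X₂] [AddCommGroup X₂] [IsTopologicalAddGroup X₂] [Module R X₂]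

noncomputable def blockOp (A : X₁ →L[R] X₁) (B : X₂ →L[R] X₁) (C : X₁ →L[R] X₂)
    (D : X₂ →L[R] X₂) : (X₁ × X₂) →L[R] (X₁ × X₂) :=
  (A.coprod B).prod (C.coprod D)

@[simp] lemma blockOp_apply (A : X₁ →L[R] X₁) (B : X₂ →L[R] X₁) (C : X₁ →L[R] X₂)
    (D : X₂ →L[R] X₂) (x : X₁) (y : X₂) :
    blockOp A B C D (x, y) = (A x + B y, C x + D y) :=
  rfl

lemma blockOp_one : blockOp (1 : X₁ →L[R] X₁) 0 0 (1 : X₂ →L[R] X₂) = 1 :=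
  ContinuousLinearMap.ext fun ⟨x, y⟩ => by simp

lemma blockOp_diag_mul (A A' : X₁ →L[R] X₁) (D D' : X₂ →L[R] X₂) :
    blockOp A 0 0 D * blockOp A' 0 0 D' = blockOp (A * A') 0 0 (D * D') :=
  ContinuousLinearMap.ext fun ⟨x, y⟩ => by simp [mul_apply_eq_comp]

lemma blockOp_upper_mul (B B' : X₂ →L[R] X₁) :
    blockOp 1 B 0 1 * blockOp 1 B' 0 1 = blockOp 1 (B + B') 0 1 :=
  ContinuousLinearMap.ext fun ⟨x, y⟩ => by simp [mul_apply_eq_comp]; abel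

lemma blockOp_lower_mul (C C' : X₁ →L[R] X₂) :
    blockOp 1 0 C 1 * blockOp 1 0 C' 1 = blockOp 1 0 (C + C') 1 :=
  ContinuousLinearMap.ext fun ⟨x, y⟩ => by simp [mul_apply_eq_comp]; abel

lemma blockOp_diag_isUnit {A : X₁ →L[R] X₁} {D : X₂ →L[R] X₂} (hA : IsUnit A)
    (hD : IsUnit D) : IsUnit (blockOp A 0 0 D) := by
  obtain ⟨a, rfl⟩ := hA
  obtain ⟨d, rfl⟩ := hD
  exact ⟨⟨blockOp a 0 0 d, blockOp ↑a⁻¹ 0 0 ↑d⁻¹, by simp [blockOp_diag_mul, blockOp_one],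
    by simp [blockOp_diag_mul, blockOp_one]⟩, rfl⟩

lemma blockOp_upper_isUnit (B : X₂ →L[R] X₁) :
    IsUnit (blockOp (1 : X₁ →L[R] X₁) B 0 (1 : X₂ →L[R] X₂)) :=
  ⟨⟨blockOp 1 B 0 1, blockOp 1 (-B) 0 1, by simp [blockOp_upper_mul, blockOp_one],
    by simp [blockOp_upper_mul, blockOp_one]⟩, rfl⟩

lemma blockOp_lower_isUnit (C : X₁ →L[R] X₂) :
    IsUnit (blockOp (1 : X₁ →L[R] X₁) 0 C (1 : X₂ →L[R] X₂)) :=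
  ⟨⟨blockOp 1 0 C 1, blockOp 1 0 (-C) 1, by simp [blockOp_lower_mul, blockOp_one],
    by simp [blockOp_lower_mul, blockOp_one]⟩, rfl⟩

lemma blockOp_eq_upper_mul_diag_mul_lower (A : X₁ →L[R] X₁) (B : X₂ →L[R] X₁)
    (C : X₁ →L[R] X₂) {D D' : X₂ →L[R] X₂} (hDD' : D * D' = 1) (hD'D : D' * D = 1) :
    blockOp A B C D = blockOp 1 (B ∘L D') 0 1 *
      (blockOp (A - B ∘L D' ∘L C) 0 0 D * blockOp 1 0 (D' ∘L C) 1) := by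
  have hDD'_apply (y : X₂) : D (D' y) = y := DFunLike.congr_fun hDD' y
  have hD'D_apply (y : X₂) : D' (D y) = y := DFunLike.congr_fun hD'D y
  refine ContinuousLinearMap.ext fun ⟨x, y⟩ => ?_
  simp [mul_apply_eq_comp, hDD'_apply, hD'D_apply]
  abel

lemma blockOp_isUnit_of_isUnit_schur (A : X₁ →L[R] X₁) (B : X₂ →L[R] X₁) (C : X₁ →L[R] X₂)
    {D D' : X₂ →L[R] X₂} (hDD' : D * D' = 1) (hD'D : D' * D = 1)
    (hS : IsUnit (A - B ∘L D' ∘L C)) : IsUnit (blockOp A B C D) := by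
  rw [blockOp_eq_upper_mul_diag_mul_lower A B C hDD' hD'D]
  exact (blockOp_upper_isUnit _).mul
    ((blockOp_diag_isUnit hS ⟨⟨D, D', hDD', hD'D⟩, rfl⟩).mul (blockOp_lower_isUnit _))

end BlockOperator

theorem two_by_two_schur_set_localization_general
    {X₁ X₂ : Type*} [NormedAddCommGroup X₁] [NormedSpace ℂ X₁] [CompleteSpace X₁]
    [NormedAddCommGroup X₂] [NormedSpace ℂ X₂]
    (A : X₁ →L[ℂ] X₁) (B : X₂ →L[ℂ] X₁) (C : X₁ →L[ℂ] X₂) (D : X₂ →L[ℂ] X₂)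
    (𝔸 : (X₁ × X₂) →L[ℂ] (X₁ × X₂))
    (h𝔸 : ∀ x y, 𝔸 (x, y) = (A x + B y, C x + D y))
    (lam : ℂ)
    (A' : X₁ →L[ℂ] X₁)
    (hA1 : (lam • (1 : X₁ →L[ℂ] X₁) - A) ∘L A' = 1)
    (hA2 : A' ∘L (lam • (1 : X₁ →L[ℂ] X₁) - A) = 1)
    (D' : X₂ →L[ℂ] X₂)
    (hD1 : (lam • (1 : X₂ →L[ℂ] X₂) - D) ∘L D' = 1)
    (hD2 : D' ∘L (lam • (1 : X₂ →L[ℂ] X₂) - D) = 1)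
    (hnorm : ‖B ∘L D' ∘L C ∘L A'‖ < 1) :
    IsUnit (lam • (1 : (X₁ × X₂) →L[ℂ] (X₁ × X₂)) - 𝔸) := by
  set a := lam • (1 : X₁ →L[ℂ] X₁) - A
  have h𝔸_block : lam • 1 - 𝔸 = blockOp a (-B) (-C) (lam • 1 - D) :=
    ContinuousLinearMap.ext fun ⟨x, y⟩ => by
      simp only [sub_apply, smul_apply, one_apply_eq_self, h𝔸, blockOp_apply, Prod.smul_mk,
        Prod.mk_sub_mk, neg_apply, a, Prod.mk.injEq]
      constructor <;> abel
  have h_schur : a - (-B) ∘L D' ∘L (-C) = (1 - B ∘L D' ∘L C ∘L A') * a := by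
    simp only [neg_comp, comp_neg, neg_neg, sub_mul, mul_def, comp_assoc, hA2, one_def, comp_id,
      id_comp]
  rw [h𝔸_block]
  refine blockOp_isUnit_of_isUnit_schur _ _ _ hD1 hD2 ?_
  rw [h_schur]
  exact (Units.oneSub _ hnorm).isUnit.mul ⟨⟨a, A', hA1, hA2⟩, rfl⟩

/-- Theorem 1.1 (the 2×2 case, bounded entries): if `λ - A` and `λ - D` are
invertible and `‖B (λ-D)⁻¹ C (λ-A)⁻¹‖ < 1`, then `λ - 𝔸` is invertible; i.e.
the spectrum of `𝔸` lies in the Schur set `S₂₁(𝔸)`. -/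
theorem two_by_two_schur_set_localization
    {X₁ X₂ : Type*} [NormedAddCommGroup X₁] [NormedSpace ℂ X₁] [CompleteSpace X₁]
    [NormedAddCommGroup X₂] [NormedSpace ℂ X₂] [CompleteSpace X₂]
    (A : X₁ →L[ℂ] X₁) (B : X₂ →L[ℂ] X₁) (C : X₁ →L[ℂ] X₂) (D : X₂ →L[ℂ] X₂)
    (𝔸 : (X₁ × X₂) →L[ℂ] (X₁ × X₂))
    (h𝔸 : ∀ x y, 𝔸 (x, y) = (A x + B y, C x + D y))
    (lam : ℂ)
    (A' : X₁ →L[ℂ] X₁)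
    (hA1 : (lam • (1 : X₁ →L[ℂ] X₁) - A) ∘L A' = 1)
    (hA2 : A' ∘L (lam • (1 : X₁ →L[ℂ] X₁) - A) = 1)
    (D' : X₂ →L[ℂ] X₂)
    (hD1 : (lam • (1 : X₂ →L[ℂ] X₂) - D) ∘L D' = 1)
    (hD2 : D' ∘L (lam • (1 : X₂ →L[ℂ] X₂) - D) = 1)
    (hnorm : ‖B ∘L D' ∘L C ∘L A'‖ < 1) :
    IsUnit (lam • (1 : (X₁ × X₂) →L[ℂ] (X₁ × X₂)) - 𝔸) :=
  two_by_two_schur_set_localization_general A B C D 𝔸 h𝔸 lam A' hA1 hA2 D' hD1 hD2 hnorm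
end

section
/- Every eigenvalue λ of a complex n×n matrix A (with n ≥ 2) lies in the union of the Cassini ovals: there exist distinct indices i, j such that |λ - A i i| · |λ - A j j| ≤ (Σ_{l ≠ i} |A l i|) · (Σ_{l ≠ j} |A l j|). -/
/-!
Take a left eigenvector `y` for `lam` and let `i`, `j` be the indices of its two largest
coordinates in modulus. The `k`-th coordinate of `y ᵥ* A = lam • y` gives
`|lam - A k k| |y k| ≤ R k · max_{l ≠ k} |y l|`, where `R k` is the off-diagonal column sum;
for `k = i` the maximum is `|y j|`, for `k = j` it is at most `|y i|`. Multiplying the two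
bounds and cancelling `|y i| |y j|` gives the oval; if `y j = 0` the first bound already
forces `lam = A i i`.
-/

open Finset Matrix

theorem Finite.exists_max_and_max_ne {α β : Type*} [Finite α] [Nontrivial α] [LinearOrder β]
    (f : α → β) : ∃ i j, i ≠ j ∧ (∀ l, f l ≤ f i) ∧ ∀ l, l ≠ i → f l ≤ f j := by
  obtain ⟨i, hi⟩ := Finite.exists_max f
  have : Nonempty {l // l ≠ i} := nonempty_subtype.mpr (exists_ne i)
  obtain ⟨⟨j, hji⟩, hj⟩ := Finite.exists_max fun l : {l // l ≠ i} => f l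
  exact ⟨i, j, hji.symm, hi, fun l hl => hj ⟨l, hl⟩⟩

namespace Matrix

variable {ι : Type*} [Fintype ι] [DecidableEq ι]

theorem exists_vecMul_eq_smul_of_mulVec_eq_smul {R : Type*} [CommRing R] [IsDomain R]
    {A : Matrix ι ι R} {lam : R} {x : ι → R} (hx0 : x ≠ 0) (hx : A *ᵥ x = lam • x) :
    ∃ y ≠ 0, y ᵥ* A = lam • y := by
  have hdet : (A - lam • 1).det = 0 :=
    exists_mulVec_eq_zero_iff.mp ⟨x, hx0, by rw [sub_mulVec, hx, smul_mulVec, one_mulVec,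
      sub_self]⟩
  obtain ⟨y, hy0, hy⟩ := exists_vecMul_eq_zero_iff.mpr hdet
  exact ⟨y, hy0, by rwa [vecMul_sub, vecMul_smul, vecMul_one, sub_eq_zero] at hy⟩

theorem sub_diag_mul_eq_sum_of_vecMul_eq_smul {R : Type*} [CommRing R] {A : Matrix ι ι R}
    {lam : R} {y : ι → R} (hy : y ᵥ* A = lam • y) (k : ι) :
    (lam - A k k) * y k = ∑ l ∈ univ.erase k, y l * A l k := by
  have hk : ∑ l, y l * A l k = lam * y k := congrFun hy k
  rw [← add_sum_erase _ _ (mem_univ k)] at hk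
  linear_combination -hk

variable {K : Type*} [NormedField K] {A : Matrix ι ι K} {lam : K} {y : ι → K}

theorem norm_sub_diag_mul_le_of_vecMul_eq_smul (hy : y ᵥ* A = lam • y) (k : ι) {c : ℝ}
    (hc : ∀ l, l ≠ k → ‖y l‖ ≤ c) :
    ‖lam - A k k‖ * ‖y k‖ ≤ (∑ l ∈ univ.erase k, ‖A l k‖) * c :=
  calc ‖lam - A k k‖ * ‖y k‖
      = ‖∑ l ∈ univ.erase k, y l * A l k‖ := by
        rw [← norm_mul, sub_diag_mul_eq_sum_of_vecMul_eq_smul hy k]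
    _ ≤ ∑ l ∈ univ.erase k, ‖y l‖ * ‖A l k‖ := by
        simpa only [norm_mul] using norm_sum_le (univ.erase k) fun l => y l * A l k
    _ ≤ ∑ l ∈ univ.erase k, c * ‖A l k‖ :=
        sum_le_sum fun l hl => by gcongr; exact hc l (ne_of_mem_erase hl)
    _ = (∑ l ∈ univ.erase k, ‖A l k‖) * c := by rw [mul_comm, mul_sum]

theorem exists_cassini_of_vecMul_eq_smul [Nontrivial ι] (hy0 : y ≠ 0)
    (hy : y ᵥ* A = lam • y) :
    ∃ i j, i ≠ j ∧ ‖lam - A i i‖ * ‖lam - A j j‖ ≤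
      (∑ l ∈ univ.erase i, ‖A l i‖) * (∑ l ∈ univ.erase j, ‖A l j‖) := by
  obtain ⟨i, j, hij, hi, hj⟩ := Finite.exists_max_and_max_ne fun l => ‖y l‖
  refine ⟨i, j, hij, ?_⟩
  have hyi : 0 < ‖y i‖ := by
    obtain ⟨k, hk⟩ := Function.ne_iff.mp hy0
    exact (norm_pos_iff.mpr hk).trans_le (hi k)
  have bound_i := norm_sub_diag_mul_le_of_vecMul_eq_smul hy i hj
  have bound_j := norm_sub_diag_mul_le_of_vecMul_eq_smul hy j fun l _ => hi l
  rcases (norm_nonneg (y j)).eq_or_lt with hyj | hyj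
  · rw [← hyj, mul_zero] at bound_i
    rw [(nonpos_of_mul_nonpos_left bound_i hyi).antisymm (norm_nonneg _), zero_mul]
    positivity
  · refine le_of_mul_le_mul_right ?_ (mul_pos hyi hyj)
    calc ‖lam - A i i‖ * ‖lam - A j j‖ * (‖y i‖ * ‖y j‖)
        = (‖lam - A i i‖ * ‖y i‖) * (‖lam - A j j‖ * ‖y j‖) := by ring
      _ ≤ ((∑ l ∈ univ.erase i, ‖A l i‖) * ‖y j‖) * ((∑ l ∈ univ.erase j, ‖A l j‖) * ‖y i‖) :=
        mul_le_mul bound_i bound_j (by positivity) (by positivity)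
      _ = (∑ l ∈ univ.erase i, ‖A l i‖) * (∑ l ∈ univ.erase j, ‖A l j‖) * (‖y i‖ * ‖y j‖) := by
        ring

end Matrix

/-- Brauer–Ostrowski Cassini ovals theorem, column version: every eigenvalue of an
`n × n` complex matrix (`n ≥ 2`) lies in some Cassini oval. -/
theorem cassini_ovals {n : ℕ} (hn : 2 ≤ n) (A : Matrix (Fin n) (Fin n) ℂ) (lam : ℂ)
    (h : ∃ x : Fin n → ℂ, x ≠ 0 ∧ A.mulVec x = lam • x) :
    ∃ i j : Fin n, i ≠ j ∧
      ‖lam - A i i‖ * ‖lam - A j j‖ ≤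
        (∑ l ∈ Finset.univ.erase i, ‖A l i‖) *
        (∑ l ∈ Finset.univ.erase j, ‖A l j‖) := by
  obtain ⟨x, hx0, hx⟩ := h
  obtain ⟨y, hy0, hy⟩ := exists_vecMul_eq_smul_of_mulVec_eq_smul hx0 hx
  have : Nontrivial (Fin n) := Fin.nontrivial_iff_two_le.mpr hn
  exact exists_cassini_of_vecMul_eq_smul hy0 hy
end

section
/- Let A be an n×n complex matrix and λ ∈ ℂ with λ ≠ A j j for all j. If for some fixed index k (with λ ≠ A k k) it holds for every j ≠ k that Σ_{i ≠ k} |A i k · A k j + (if i ≠ j then (λ - A k k)·A i j else 0)| < |λ - A j j| · |λ - A k k|, then λ is not an eigenvalue of A. -/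
open Finset Matrix

/-!
If `lam` were an eigenvalue of `A`, it would also have a left eigenvector `y ≠ 0`. Eliminating the
`k`-th equation of `y ᵥ* A = lam • y` from the others gives, for every `j ≠ k`,
`∑ i ≠ k, y i * (A i k * A k j + [i ≠ j] (lam - A k k) * A i j)
  = (lam - A k k) * (lam - A j j) * y j`,
and at an index `j ≠ k` maximising `‖y j‖` the triangle inequality contradicts the hypothesis.
If instead `y` vanishes off `k`, the `k`-th equation forces `lam = A k k`.
-/

theorem Matrix.exists_vecMul_eq_smul_of_mulVec_eq_smul_s6 {ι R : Type*} [Fintype ι] [DecidableEq ι]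
    [CommRing R] [IsDomain R] {A : Matrix ι ι R} {lam : R} {x : ι → R} (hx : x ≠ 0)
    (hAx : A *ᵥ x = lam • x) : ∃ y ≠ 0, y ᵥ* A = lam • y := by
  have hdet : (lam • (1 : Matrix ι ι R) - A).det = 0 :=
    exists_mulVec_eq_zero_iff.1
      ⟨x, hx, by rw [sub_mulVec, smul_mulVec, one_mulVec, hAx, sub_self]⟩
  obtain ⟨y, hy, hyA⟩ := exists_vecMul_eq_zero_iff.2 hdet
  refine ⟨y, hy, ?_⟩
  rwa [vecMul_sub, vecMul_smul, vecMul_one, sub_eq_zero, eq_comm] at hyA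

theorem Finset.exists_norm_le_sum_norm_of_sum_mul_eq {ι K : Type*} [NormedDivisionRing K]
    {s : Finset ι} {S : ι → ι → K} {d y : ι → K} (hy : ∃ j ∈ s, y j ≠ 0)
    (h : ∀ j ∈ s, ∑ i ∈ s, y i * S i j = d j * y j) : ∃ j ∈ s, ‖d j‖ ≤ ∑ i ∈ s, ‖S i j‖ := by
  obtain ⟨j₁, hj₁, hyj₁⟩ := hy
  obtain ⟨j, hj, hmax⟩ := s.exists_max_image (fun i => ‖y i‖) ⟨j₁, hj₁⟩
  have hpos : 0 < ‖y j‖ := (norm_pos_iff.2 hyj₁).trans_le (hmax j₁ hj₁)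
  refine ⟨j, hj, le_of_mul_le_mul_right ?_ hpos⟩
  calc ‖d j‖ * ‖y j‖ = ‖∑ i ∈ s, y i * S i j‖ := by rw [h j hj, norm_mul]
    _ ≤ ∑ i ∈ s, ‖y i‖ * ‖S i j‖ := (norm_sum_le _ _).trans_eq (by simp only [norm_mul])
    _ ≤ ∑ i ∈ s, ‖y j‖ * ‖S i j‖ := by gcongr with i hi; exact hmax i hi
    _ = (∑ i ∈ s, ‖S i j‖) * ‖y j‖ := by rw [← mul_sum, mul_comm]

theorem Matrix.sum_erase_mul_schur_of_vecMul_eq_smul {ι R : Type*} [Fintype ι] [DecidableEq ι]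
    [CommRing R] {A : Matrix ι ι R} {lam : R} {y : ι → R} (hy : y ᵥ* A = lam • y) {j k : ι}
    (hjk : j ≠ k) :
    ∑ i ∈ univ.erase k, y i * (A i k * A k j + if i ≠ j then (lam - A k k) * A i j else 0) =
      (lam - A k k) * (lam - A j j) * y j := by
  have hcol : ∀ l, ∑ i, y i * A i l = lam * y l := fun l => congrFun hy l
  have hk : ∑ i, y i * (A i k * A k j) = lam * y k * A k j := by
    simp only [← mul_assoc, ← sum_mul, hcol]
  have hj : ∑ i, (if i ≠ j then y i * ((lam - A k k) * A i j) else 0) =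
      (lam - A k k) * (lam * y j - y j * A j j) := by
    rw [← sum_filter, filter_ne', sum_erase_eq_sub (mem_univ j)]
    simp only [mul_left_comm (y _), ← mul_sum, hcol, mul_sub]
  rw [sum_erase_eq_sub (mem_univ k)]
  simp only [mul_add, mul_ite, mul_zero, sum_add_distrib, hk, hj, if_pos hjk.symm]
  ring

/-- Scalar form of the Schur-set spectral exclusion: if `λ` avoids all diagonal
entries and the Schur-set inequalities hold strictly for some pivot `k`,
then `λ` is not an eigenvalue of `A`. -/
theorem schur_set_exclusion {n : ℕ} (A : Matrix (Fin n) (Fin n) ℂ) (lam : ℂ)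
    (hdiag : ∀ j, lam ≠ A j j) (k : Fin n)
    (hk : ∀ j, j ≠ k →
      ∑ i ∈ Finset.univ.erase k,
          ‖A i k * A k j + (if i ≠ j then (lam - A k k) * A i j else 0)‖ <
        ‖lam - A j j‖ * ‖lam - A k k‖) :
    ¬ ∃ x : Fin n → ℂ, x ≠ 0 ∧ A.mulVec x = lam • x := by
  rintro ⟨x, hx, hAx⟩
  obtain ⟨y, hy0, hy⟩ := exists_vecMul_eq_smul_of_mulVec_eq_smul_s6 hx hAx
  by_cases hz : ∃ j ∈ univ.erase k, y j ≠ 0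
  · obtain ⟨j, hj, hle⟩ := exists_norm_le_sum_norm_of_sum_mul_eq hz fun j hj =>
      sum_erase_mul_schur_of_vecMul_eq_smul hy (ne_of_mem_erase hj)
    rw [norm_mul, mul_comm] at hle
    exact (hk j (ne_of_mem_erase hj)).not_ge hle
  · push Not at hz
    have hyk : y k ≠ 0 := fun h0 => hy0 <| funext fun i => by
      by_cases hik : i = k
      · rwa [hik]
      · exact hz i (mem_erase.2 ⟨hik, mem_univ i⟩)
    have hcol : lam * y k = y k * A k k :=
      (congrFun hy k).symm.trans <| Fintype.sum_eq_single k fun i hik => by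
        rw [hz i (mem_erase.2 ⟨hik, mem_univ i⟩), zero_mul]
    exact hdiag k (mul_right_cancel₀ hyk (hcol.trans (mul_comm _ _)))
end

section
/- Let A be an n×n complex matrix and λ ∈ ℂ with λ ≠ A i i for all i. If λ lies outside every Cassini oval, i.e. for all distinct i, j one has (Σ_{l≠i}|A l i|)·(Σ_{l≠j}|A l j|) < |λ - A i i|·|λ - A j j|, then λ lies outside some Schur set S_k(A): there exists an index k such that for every j ≠ k, Σ_{i ≠ k} |A i k · A k j + (if i ≠ j then (λ - A k k)·A i j else 0)| < |λ - A j j|·|λ - A k k|. -/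
/-!
Write `r i` for the deleted column sum `∑_{l ≠ i} ‖A l i‖` and `d i = ‖λ - A i i‖ > 0`.
Two indices with `d ≤ r` would violate the Cassini condition, so some `k` has
`r j < d j` for every `j ≠ k`. For that `k`, the triangle inequality bounds the Schur sum by
`r k · a + d k · (r j - a)` with `a = ‖A k j‖ ∈ [0, r j]`; this is affine in `a`, and at both
endpoints it is below `d j · d k`: at `a = 0` because `r j < d j`, at `a = r j` by Cassini.
-/

open Finset

namespace Matrix

variable {ι 𝕜 : Type*} [Fintype ι] [DecidableEq ι] [NormedRing 𝕜]

def offDiagColNormSum (A : Matrix ι ι 𝕜) (j : ι) : ℝ :=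
  ∑ l ∈ univ.erase j, ‖A l j‖

theorem norm_le_offDiagColNormSum (A : Matrix ι ι 𝕜) {k j : ι} (hkj : k ≠ j) :
    ‖A k j‖ ≤ A.offDiagColNormSum j :=
  single_le_sum (f := fun l => ‖A l j‖) (fun _ _ => norm_nonneg _)
    (mem_erase.2 ⟨hkj, mem_univ k⟩)

theorem sum_erase_ite_ne_norm (A : Matrix ι ι 𝕜) {k j : ι} (hkj : k ≠ j) :
    ∑ i ∈ univ.erase k, (if i ≠ j then ‖A i j‖ else 0) =
      A.offDiagColNormSum j - ‖A k j‖ := by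
  rw [← sum_filter, filter_ne', erase_right_comm,
    sum_erase_eq_sub (mem_erase.2 ⟨hkj, mem_univ k⟩), offDiagColNormSum]

theorem schur_sum_le (A : Matrix ι ι 𝕜) (lam : 𝕜) {k j : ι} (hjk : j ≠ k) :
    ∑ i ∈ univ.erase k, ‖A i k * A k j + (if i ≠ j then (lam - A k k) * A i j else 0)‖ ≤
      A.offDiagColNormSum k * ‖A k j‖ +
        ‖lam - A k k‖ * (A.offDiagColNormSum j - ‖A k j‖) :=
  calc _ ≤ ∑ i ∈ univ.erase k,
        (‖A i k‖ * ‖A k j‖ + ‖lam - A k k‖ * if i ≠ j then ‖A i j‖ else 0) := by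
        refine sum_le_sum fun i _ => (norm_add_le _ _).trans (add_le_add (norm_mul_le _ _) ?_)
        split_ifs
        · exact norm_mul_le _ _
        · simp
    _ = _ := by
        rw [sum_add_distrib, ← sum_mul, ← mul_sum, sum_erase_ite_ne_norm A hjk.symm]
        rfl

end Matrix

theorem exists_forall_ne_lt_of_mul_lt_mul {ι : Type*} [Nonempty ι] {r d : ι → ℝ}
    (hd : ∀ i, 0 ≤ d i) (h : ∀ i j, i ≠ j → r i * r j < d i * d j) :
    ∃ k, ∀ j, j ≠ k → r j < d j := by
  by_cases hfail : ∃ k, d k ≤ r k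
  · obtain ⟨k, hk⟩ := hfail
    refine ⟨k, fun j hjk => lt_of_not_ge fun hj => ?_⟩
    have := mul_le_mul hk hj (hd j) ((hd k).trans hk)
    linarith [h k j hjk.symm]
  · simp only [not_exists, not_le] at hfail
    exact ⟨Classical.arbitrary ι, fun j _ => hfail j⟩

theorem mul_add_mul_sub_lt {r s t x y : ℝ} (ht : 0 ≤ t) (hts : t ≤ s) (hsy : s < y)
    (hx : 0 < x) (h : r * s < x * y) : r * t + x * (s - t) < y * x := by
  rcases ht.eq_or_lt with rfl | ht
  · nlinarith
  · have hs : 0 < s := ht.trans_le hts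
    refine lt_of_mul_lt_mul_left ?_ hs.le
    -- `s` times the gap is `t (x y - r s) + (s - t) x (y - s)`
    nlinarith [mul_pos ht (sub_pos.2 h),
      mul_nonneg (sub_nonneg.2 hts) (mul_pos hx (sub_pos.2 hsy)).le]

/-- If `λ` lies strictly outside every Cassini oval, then it lies outside some
Schur set `S_k(A)`. -/
theorem schur_sets_in_cassini {n : ℕ} (hn : 2 ≤ n)
    (A : Matrix (Fin n) (Fin n) ℂ) (lam : ℂ) (hdiag : ∀ i, lam ≠ A i i)
    (h : ∀ i j : Fin n, i ≠ j →
      (∑ l ∈ Finset.univ.erase i, ‖A l i‖) *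
      (∑ l ∈ Finset.univ.erase j, ‖A l j‖) <
        ‖lam - A i i‖ * ‖lam - A j j‖) :
    ∃ k : Fin n, ∀ j, j ≠ k →
      ∑ i ∈ Finset.univ.erase k,
          ‖A i k * A k j + (if i ≠ j then (lam - A k k) * A i j else 0)‖ <
        ‖lam - A j j‖ * ‖lam - A k k‖ := by
  have : Nonempty (Fin n) := ⟨⟨0, by omega⟩⟩
  obtain ⟨k, hk⟩ := exists_forall_ne_lt_of_mul_lt_mul (r := A.offDiagColNormSum)
    (fun i => norm_nonneg (lam - A i i)) h
  refine ⟨k, fun j hjk => (A.schur_sum_le lam hjk).trans_lt ?_⟩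
  exact mul_add_mul_sub_lt (norm_nonneg _) (A.norm_le_offDiagColNormSum hjk.symm) (hk j hjk)
    (norm_pos_iff.2 (sub_ne_zero.2 (hdiag k))) (h k j hjk.symm)
end

section
/- Let 𝔸 be an n×n block matrix of bounded operators A i j : Xⱼ → Xᵢ on the product space X with the 1-norm, and let λ ∈ ℂ be such that λ - A i i is invertible for all i. If for every j ≠ n, Σ_{i ≠ n} ‖(A i n (λ - A n n)⁻¹ A n j + (if i ≠ j then A i j else 0)) (λ - A j j)⁻¹‖ < 1, then λ - 𝔸 is invertible with bounded inverse. -/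
/-!
Write `λ - 𝔸 = (1 - K) D`, where `D = diag (λ - A i i)` and `K` is the off-diagonal part of
`𝔸 D⁻¹`. Let `E` be the coordinate projection killing the pivot coordinate. Since the pivot
entry of `K` vanishes, `(1 - E) K (1 - E) = 0`, and in any ring this gives the Schur
factorization
`1 - K = (1 - E K (1 - E)) (1 - (E K E + E K (1 - E) K E)) (1 - (1 - E) K E)`,
whose outer factors are `1` minus a square-zero element. The middle factor is `1 - N` for the
block operator `N` with entries `(A i n R n A n j + [i ≠ j] A i j) R j` off the pivot row and
column, where `R i = (λ - A i i)⁻¹`. On the product with the 1-norm a block operator is bounded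
by its largest column sum, so `‖N‖ < 1` and `1 - N` is inverted by the Neumann series.
-/

open Finset

section Ring

variable {R : Type*} [Ring R]

theorem one_sub_mul_one_sub_mul_one_sub {a b c : R} (haa : a * a = 0) (hab : a * b = 0)
    (hbc : b * c = 0) (hcc : c * c = 0) :
    (1 - a) * (1 - (b + a * c)) * (1 - c) = 1 - (a + b + c) := by
  have expand : (1 - a) * (1 - (b + a * c)) * (1 - c) = 1 - (a + b + c) + a * b + b * c
      + a * a * c + a * (c * c) - a * b * c - a * a * (c * c) := by noncomm_ring
  simp [expand, haa, hab, hbc, hcc]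

namespace IsIdempotentElem

variable {e : R} (he : IsIdempotentElem e)
include he

theorem mul_one_sub_self_mul (x : R) : e * ((1 - e) * x) = 0 := by
  rw [← mul_assoc, he.mul_one_sub_self, zero_mul]

theorem one_sub_mul_self_mul (x : R) : (1 - e) * (e * x) = 0 := by
  rw [← mul_assoc, he.one_sub_mul_self, zero_mul]

theorem one_sub_eq_mul_schur_mul {k : R} (hk : (1 - e) * k * (1 - e) = 0) :
    1 - k = (1 - e * k * (1 - e)) * (1 - (e * k * e + e * k * (1 - e) * k * e)) *
      (1 - (1 - e) * k * e) := by
  have hk' : k = e * k * (1 - e) + e * k * e + (1 - e) * k * e := by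
    calc k = e * k * (1 - e) + e * k * e + (1 - e) * k * e + (1 - e) * k * (1 - e) := by
          noncomm_ring
      _ = _ := by rw [hk, add_zero]
  have hcorner : e * k * (1 - e) * k * e = e * k * (1 - e) * ((1 - e) * k * e) := by
    have hqq (x : R) : (1 - e) * ((1 - e) * x) = (1 - e) * x := by
      rw [← mul_assoc, he.one_sub.eq]
    simp only [mul_assoc, hqq]
  rw [hcorner, one_sub_mul_one_sub_mul_one_sub, ← hk'] <;>
    simp only [mul_assoc, he.mul_one_sub_self_mul, he.one_sub_mul_self_mul, mul_zero]

theorem isUnit_one_sub_of_isUnit_schur {k : R} (hk : (1 - e) * k * (1 - e) = 0)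
    (hS : IsUnit (1 - (e * k * e + e * k * (1 - e) * k * e))) : IsUnit (1 - k) := by
  rw [he.one_sub_eq_mul_schur_mul hk]
  refine ((IsNilpotent.isUnit_one_sub ⟨2, ?_⟩).mul hS).mul (IsNilpotent.isUnit_one_sub ⟨2, ?_⟩) <;>
    simp only [sq, mul_assoc, he.mul_one_sub_self_mul, he.one_sub_mul_self_mul, mul_zero]

end IsIdempotentElem

end Ring

theorem sum_apply_ite_eq {𝕜 ι Y : Type*} [Semiring 𝕜] [Fintype ι] [DecidableEq ι]
    {X : ι → Type*} [∀ i, AddCommMonoid (X i)] [∀ i, Module 𝕜 (X i)]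
    [∀ i, TopologicalSpace (X i)] [AddCommMonoid Y] [Module 𝕜 Y] [TopologicalSpace Y]
    (i₀ : ι) (L : ∀ j, X j →L[𝕜] Y) (x : ∀ j, X j) :
    ∑ j, L j (if j = i₀ then x j else 0) = L i₀ (x i₀) := by
  rw [sum_eq_single i₀ (fun j _ hj => by simp [hj]) (by simp)]
  simp

namespace PiLp

variable {p : ENNReal} {𝕜 : Type*} [NontriviallyNormedField 𝕜] {ι : Type*} [Fintype ι]
  {X : ι → Type*} [∀ i, NormedAddCommGroup (X i)] [∀ i, NormedSpace 𝕜 (X i)]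

noncomputable def blockOp (M : ∀ i j, X j →L[𝕜] X i) : PiLp p X →L[𝕜] PiLp p X :=
  (PiLp.continuousLinearEquiv p 𝕜 X).symm.toContinuousLinearMap ∘L
    ContinuousLinearMap.pi fun i => ∑ j, M i j ∘L PiLp.proj p X j

@[simp] theorem blockOp_apply (M : ∀ i j, X j →L[𝕜] X i) (x : PiLp p X) (i : ι) :
    blockOp M x i = ∑ j, M i j (x j) := by
  simp [blockOp]

theorem norm_blockOp_le {M : ∀ i j, X j →L[𝕜] X i} {c : ℝ} (hc : 0 ≤ c)
    (hM : ∀ j, ∑ i, ‖M i j‖ ≤ c) : ‖(blockOp M : PiLp 1 X →L[𝕜] PiLp 1 X)‖ ≤ c := by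
  refine ContinuousLinearMap.opNorm_le_bound _ hc fun x => ?_
  calc ‖blockOp M x‖ = ∑ i, ‖∑ j, M i j (x j)‖ := by simp [PiLp.norm_eq_of_L1]
    _ ≤ ∑ i, ∑ j, ‖M i j‖ * ‖x j‖ :=
      sum_le_sum fun i _ => (norm_sum_le _ _).trans (sum_le_sum fun j _ => (M i j).le_opNorm _)
    _ = ∑ j, (∑ i, ‖M i j‖) * ‖x j‖ := by rw [sum_comm]; simp [sum_mul]
    _ ≤ ∑ j, c * ‖x j‖ := sum_le_sum fun j _ => by gcongr; exact hM j
    _ = c * ‖x‖ := by rw [← mul_sum, PiLp.norm_eq_of_L1]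

theorem norm_blockOp_lt_one [Nonempty ι] {M : ∀ i j, X j →L[𝕜] X i}
    (hM : ∀ j, ∑ i, ‖M i j‖ < 1) : ‖(blockOp M : PiLp 1 X →L[𝕜] PiLp 1 X)‖ < 1 := by
  obtain ⟨j₀, -, hj₀⟩ := exists_max_image univ (fun j => ∑ i, ‖M i j‖) univ_nonempty
  exact (norm_blockOp_le (sum_nonneg fun _ _ => norm_nonneg _)
    fun j => hj₀ j (mem_univ j)).trans_lt (hM j₀)

section Algebra

variable [Fact (1 ≤ p)]

noncomputable def diagOp : (∀ i, X i →L[𝕜] X i) →+* (PiLp p X →L[𝕜] PiLp p X) where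
  toFun d := (PiLp.continuousLinearEquiv p 𝕜 X).symm.toContinuousLinearMap ∘L
    ContinuousLinearMap.piMap d ∘L (PiLp.continuousLinearEquiv p 𝕜 X).toContinuousLinearMap
  map_one' := rfl
  map_mul' _ _ := rfl
  map_zero' := rfl
  map_add' _ _ := rfl

@[simp] theorem diagOp_apply (d : ∀ i, X i →L[𝕜] X i) (x : PiLp p X) (i : ι) :
    diagOp d x i = d i (x i) := rfl

variable [DecidableEq ι]

noncomputable def zeroCoord (i₀ : ι) : PiLp p X →L[𝕜] PiLp p X :=
  diagOp fun i => if i = i₀ then 0 else 1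

@[simp] theorem zeroCoord_apply (i₀ : ι) (x : PiLp p X) (i : ι) :
    (zeroCoord i₀ : PiLp p X →L[𝕜] PiLp p X) x i = if i = i₀ then 0 else x i := by
  by_cases h : i = i₀ <;> simp [zeroCoord, h]

@[simp] theorem one_sub_zeroCoord_apply (i₀ : ι) (x : PiLp p X) (i : ι) :
    (1 - zeroCoord i₀ : PiLp p X →L[𝕜] PiLp p X) x i = if i = i₀ then x i else 0 := by
  by_cases h : i = i₀ <;> simp [h]

theorem isIdempotentElem_zeroCoord (i₀ : ι) :
    IsIdempotentElem (zeroCoord i₀ : PiLp p X →L[𝕜] PiLp p X) := by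
  ext x i
  by_cases hi : i = i₀ <;> simp [hi]

theorem one_sub_zeroCoord_mul_blockOp_mul_eq_zero (i₀ : ι) (K : ∀ i j, X j →L[𝕜] X i)
    (hK : K i₀ i₀ = 0) :
    (1 - zeroCoord i₀) * blockOp K * (1 - zeroCoord i₀) = (0 : PiLp p X →L[𝕜] PiLp p X) := by
  ext x i
  simp only [mul_apply_eq_comp, one_sub_zeroCoord_apply, blockOp_apply]
  split_ifs with hi
  · subst hi
    simp [sum_apply_ite_eq, hK]
  · rfl

def schurBlock (i₀ : ι) (K : ∀ i j, X j →L[𝕜] X i) : ∀ i j, X j →L[𝕜] X i :=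
  fun i j => if i = i₀ ∨ j = i₀ then 0 else K i j + K i i₀ ∘L K i₀ j

theorem blockOp_schurBlock (i₀ : ι) (K : ∀ i j, X j →L[𝕜] X i) :
    (blockOp (schurBlock i₀ K) : PiLp p X →L[𝕜] PiLp p X) =
      zeroCoord i₀ * blockOp K * zeroCoord i₀ +
        zeroCoord i₀ * blockOp K * (1 - zeroCoord i₀) * blockOp K * zeroCoord i₀ := by
  ext x i
  simp only [mul_apply_eq_comp, _root_.add_apply, one_sub_zeroCoord_apply,
    zeroCoord_apply, blockOp_apply, PiLp.add_apply, sum_apply_ite_eq]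
  by_cases hi : i = i₀
  · simp [schurBlock, hi]
  · simp only [schurBlock, hi, false_or, if_false, map_sum, ← sum_add_distrib]
    refine sum_congr rfl fun j _ => ?_
    split_ifs <;> simp

end Algebra

section Resolvent

variable [DecidableEq ι] (A : ∀ i j, X j →L[𝕜] X i) (R : ∀ i, X i →L[𝕜] X i)

def offDiagComp : ∀ i j, X j →L[𝕜] X i := fun i j => if i = j then 0 else A i j ∘L R j

theorem smul_one_sub_blockOp_eq_mul [Fact (1 ≤ p)] (lam : 𝕜)
    (hR : ∀ i, R i ∘L (lam • (1 : X i →L[𝕜] X i) - A i i) = 1) :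
    lam • (1 : PiLp p X →L[𝕜] PiLp p X) - blockOp A =
      (1 - blockOp (offDiagComp A R)) * diagOp fun i => lam • 1 - A i i := by
  ext x i
  have hcancel (j : ι) :
      offDiagComp A R i j ((lam • 1 - A j j) (x j)) = if i = j then 0 else A i j (x j) := by
    have hRj : R j ((lam • 1 - A j j) (x j)) = x j := congr($(hR j) (x j))
    unfold offDiagComp
    split_ifs
    · rfl
    · rw [ContinuousLinearMap.comp_apply, hRj]
  simp only [mul_apply_eq_comp, _root_.sub_apply, one_apply_eq_self, blockOp_apply,
    PiLp.sub_apply]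
  simp only [diagOp_apply, hcancel]
  simp [sum_ite, filter_ne, sum_erase_eq_sub]

theorem sum_norm_schurBlock_offDiagComp_lt_one (i₀ : ι) (hschur : ∀ j, j ≠ i₀ →
      ∑ i ∈ Finset.univ.erase i₀,
        ‖(A i i₀ ∘L R i₀ ∘L A i₀ j + (if i ≠ j then A i j else 0)) ∘L R j‖ < 1) (j : ι) :
    ∑ i, ‖schurBlock i₀ (offDiagComp A R) i j‖ < 1 := by
  by_cases hj : j = i₀
  · simp [schurBlock, hj]
  have hentry (i : ι) (hi : i ≠ i₀) : schurBlock i₀ (offDiagComp A R) i j =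
      (A i i₀ ∘L R i₀ ∘L A i₀ j + (if i ≠ j then A i j else 0)) ∘L R j := by
    by_cases hij : i = j <;> simp [schurBlock, offDiagComp, hi, hj, hij, Ne.symm hj,
      ContinuousLinearMap.comp_assoc, add_comm]
  calc _ = ∑ i ∈ univ.erase i₀, ‖schurBlock i₀ (offDiagComp A R) i j‖ := by
        simp [schurBlock, hj, apply_ite (‖·‖), sum_ite, filter_ne']
    _ = ∑ i ∈ univ.erase i₀,
        ‖(A i i₀ ∘L R i₀ ∘L A i₀ j + (if i ≠ j then A i j else 0)) ∘L R j‖ :=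
        sum_congr rfl fun i hi => by rw [hentry i (ne_of_mem_erase hi)]
    _ < 1 := hschur j hj

end Resolvent

theorem isUnit_smul_one_sub_blockOp [DecidableEq ι] [∀ i, CompleteSpace (X i)]
    (A : ∀ i j, X j →L[𝕜] X i) (lam : 𝕜) (R : ∀ i, X i →L[𝕜] X i)
    (hR1 : ∀ i, (lam • (1 : X i →L[𝕜] X i) - A i i) ∘L R i = 1)
    (hR2 : ∀ i, R i ∘L (lam • (1 : X i →L[𝕜] X i) - A i i) = 1)
    (i₀ : ι) (hschur : ∀ j, j ≠ i₀ →
      ∑ i ∈ Finset.univ.erase i₀,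
        ‖(A i i₀ ∘L R i₀ ∘L A i₀ j + (if i ≠ j then A i j else 0)) ∘L R j‖ < 1) :
    IsUnit (lam • (1 : PiLp 1 X →L[𝕜] PiLp 1 X) - blockOp A) := by
  have : Nonempty ι := ⟨i₀⟩
  have hD : IsUnit (diagOp fun i => lam • 1 - A i i : PiLp 1 X →L[𝕜] PiLp 1 X) :=
    (Pi.isUnit_iff.2 fun i => ⟨⟨_, R i, hR1 i, hR2 i⟩, rfl⟩).map diagOp
  have hN : ‖(blockOp (schurBlock i₀ (offDiagComp A R)) : PiLp 1 X →L[𝕜] PiLp 1 X)‖ < 1 :=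
    norm_blockOp_lt_one (sum_norm_schurBlock_offDiagComp_lt_one A R i₀ hschur)
  rw [smul_one_sub_blockOp_eq_mul A R lam hR2]
  refine IsUnit.mul ?_ hD
  refine (isIdempotentElem_zeroCoord i₀).isUnit_one_sub_of_isUnit_schur
    (one_sub_zeroCoord_mul_blockOp_mul_eq_zero i₀ _ (if_pos rfl)) ?_
  rw [← blockOp_schurBlock]
  exact isUnit_one_sub_of_norm_lt_one hN

end PiLp

/-- Schur-set localization for an `(n+1) × (n+1)` block matrix of bounded operators
(pivot = last index): if each `λ - A i i` is boundedly invertible and the Schur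
quantities `𝓡_{n j}(λ)` are all `< 1`, then `λ - 𝔸` is boundedly invertible on the
product space with the 1-norm. -/
theorem block_schur_set_localization
    {n : ℕ} (X : Fin (n + 1) → Type*) [∀ i, NormedAddCommGroup (X i)]
    [∀ i, NormedSpace ℂ (X i)] [∀ i, CompleteSpace (X i)]
    (A : ∀ i j, X j →L[ℂ] X i)
    (𝔸 : PiLp 1 X →L[ℂ] PiLp 1 X)
    (h𝔸 : ∀ (x : PiLp 1 X) (i : Fin (n + 1)), 𝔸 x i = ∑ j, A i j (x j))
    (lam : ℂ)
    (R : ∀ i, X i →L[ℂ] X i)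
    (hR1 : ∀ i, (lam • (1 : X i →L[ℂ] X i) - A i i) ∘L R i = 1)
    (hR2 : ∀ i, R i ∘L (lam • (1 : X i →L[ℂ] X i) - A i i) = 1)
    (hschur : ∀ j, j ≠ Fin.last n →
      ∑ i ∈ Finset.univ.erase (Fin.last n),
        ‖(A i (Fin.last n) ∘L R (Fin.last n) ∘L A (Fin.last n) j +
            (if i ≠ j then A i j else 0)) ∘L R j‖ < 1) :
    IsUnit (lam • (1 : PiLp 1 X →L[ℂ] PiLp 1 X) - 𝔸) := by
  have h𝔸_eq : 𝔸 = PiLp.blockOp A :=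
    ContinuousLinearMap.ext fun x => PiLp.ext fun i => by rw [h𝔸, PiLp.blockOp_apply]
  rw [h𝔸_eq]
  exact PiLp.isUnit_smul_one_sub_blockOp A lam R hR1 hR2 (Fin.last n) hschur
end
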